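/- (Data processing for sandwiched Rényi relative entropy of classical-quantum form, special case: pinching) For quantum states ρ, σ with supp(ρ) ⊆ supp(σ), and α ∈ (0,1], the quantity D_{1+α}(E_σ(ρ)‖σ) := (1/α) log Tr[ E_σ(ρ)^{1+α} σ^{−α} ] satisfies D_{1+α}(E_σ(ρ)‖σ) ≤ D_{1+α}(ρ‖σ), where D_{1+α}(ρ‖σ) is the sandwiched Rényi relative entropy. -/

import Mathlib

/-!
Let `w_j` be an orthonormal eigenbasis of `E_σ(ρ) = ∑ᵢ Pᵢ ρ Pᵢ`, with eigenvalues `μ_j`, and put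
`z_ij = Pᵢ w_j`. Since each `Pᵢ` commutes with `σ` and with `E_σ(ρ)`, the matrix
`X = σ^{-α/(2(1+α))} ρ σ^{-α/(2(1+α))}` satisfies
`⟨z_ij, X z_ij⟩ = λᵢ^{-α/(1+α)} μ_j ‖z_ij‖²`, while
`Tr[E_σ(ρ)^{1+α} σ^{-α}] = ∑_ij (λᵢ^{-α/(1+α)} μ_j)^{1+α} ‖z_ij‖²`.
Jensen's inequality for the convex `t ↦ t^{1+α}` in the spectral measure of `X` at `z_ij` bounds
each term by `⟨z_ij, X^{1+α} z_ij⟩`, and these sum to `Tr X^{1+α}` because the `z_ij` come from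
the resolution of the identity `(Pᵢ)` applied to an orthonormal basis. Taking `log₂` needs the
left side to be positive, which is where `supp ρ ⊆ supp σ` enters.
-/

open Matrix
open scoped ComplexOrder

set_option linter.unusedSectionVars false

variable {n : Type*} [Fintype n] [DecidableEq n]

lemma cfcHerm {A : Matrix n n ℂ} (hA : A.IsHermitian) (f : ℝ → ℝ) :
    (hA.cfc f).IsHermitian := by
  rw [← hA.cfc_eq f]
  exact cfc_predicate f A

lemma pinchHerm {v : ℕ} (P : Fin v → Matrix n n ℂ) (hP : ∀ i, (P i).IsHermitian)
    {ρ : Matrix n n ℂ} (hρ : ρ.IsHermitian) : (∑ i, P i * ρ * P i).IsHermitian := by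
  unfold Matrix.IsHermitian
  rw [conjTranspose_sum]
  refine Finset.sum_congr rfl fun i _ => ?_
  simp [conjTranspose_mul, Matrix.mul_assoc, (hP i).eq, hρ.eq]

/-- Pseudo-power `A^p` of a Hermitian matrix (on its support), via functional calculus. -/
noncomputable def mpow {A : Matrix n n ℂ} (hA : A.IsHermitian) (p : ℝ) : Matrix n n ℂ :=
  hA.cfc (fun t => if t = 0 then 0 else t ^ p)

lemma sandwichHerm {ρ σ : Matrix n n ℂ} (hρ : ρ.IsHermitian) (hσ : σ.IsHermitian)
    (p : ℝ) : (mpow hσ p * ρ * mpow hσ p).IsHermitian := by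
  have h := cfcHerm hσ (fun t => if t = 0 then 0 else t ^ p)
  unfold Matrix.IsHermitian mpow
  simp [conjTranspose_mul, Matrix.mul_assoc, h.eq, hρ.eq]

/-- The sandwiched Rényi relative entropy of order `1 + α` (base-2 logarithm),
`D_{1+α}(ρ‖σ) = (1/α) log₂ Tr[(σ^{−α/(2(1+α))} ρ σ^{−α/(2(1+α))})^{1+α}]`. -/
noncomputable def sandRenyi (α : ℝ) (ρ σ : Matrix n n ℂ)
    (hρ : ρ.IsHermitian) (hσ : σ.IsHermitian) : ℝ :=
  (1 / α) * Real.logb 2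
    (((sandwichHerm hρ hσ (-(α / (2 * (1 + α))))).cfc
        (fun t => if t ≤ 0 then 0 else t ^ (1 + α))).trace.re)

-- The scalar functions of `sandRenyi` (`posRpow (1 + α)`) and of `mpow` (`pseudoRpow p`).
noncomputable def posRpow (p t : ℝ) : ℝ := if t ≤ 0 then 0 else t ^ p

noncomputable def pseudoRpow (p t : ℝ) : ℝ := if t = 0 then 0 else t ^ p

lemma posRpow_nonneg (p t : ℝ) : 0 ≤ posRpow p t := by
  unfold posRpow
  split_ifs with ht
  exacts [le_rfl, Real.rpow_nonneg (not_le.mp ht).le p]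

lemma posRpow_pos {p t : ℝ} (ht : 0 < t) : 0 < posRpow p t := by
  rw [posRpow, if_neg ht.not_ge]
  exact Real.rpow_pos_of_pos ht p

lemma posRpow_of_nonneg {p t : ℝ} (hp : p ≠ 0) (ht : 0 ≤ t) : posRpow p t = t ^ p := by
  rcases ht.eq_or_lt with rfl | ht
  · simp [posRpow, Real.zero_rpow hp]
  · rw [posRpow, if_neg ht.not_ge]

lemma convexOn_posRpow {p : ℝ} (hp : 1 ≤ p) : ConvexOn ℝ (Set.Ici 0) (posRpow p) :=
  (convexOn_rpow hp).congr fun _ ht => (posRpow_of_nonneg (by positivity) ht).symm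

lemma pseudoRpow_nonneg (p : ℝ) {t : ℝ} (ht : 0 ≤ t) : 0 ≤ pseudoRpow p t := by
  unfold pseudoRpow
  split_ifs
  exacts [le_rfl, Real.rpow_nonneg ht p]

lemma pseudoRpow_pos (p : ℝ) {t : ℝ} (ht : 0 < t) : 0 < pseudoRpow p t := by
  rw [pseudoRpow, if_neg ht.ne']
  exact Real.rpow_pos_of_pos ht p

lemma posRpow_pseudoRpow_sq_mul (q r : ℝ) {l : ℝ} (hl : 0 ≤ l) (μ : ℝ) :
    posRpow q (pseudoRpow r l ^ 2 * μ) = pseudoRpow (2 * r * q) l * posRpow q μ := by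
  rcases hl.eq_or_lt with rfl | hl
  · simp [pseudoRpow, posRpow]
  have hlr : 0 < l ^ r := Real.rpow_pos_of_pos hl r
  rw [pseudoRpow, pseudoRpow, if_neg hl.ne', if_neg hl.ne']
  rcases le_or_gt μ 0 with hμ | hμ
  · simp [posRpow, hμ, mul_nonpos_of_nonneg_of_nonpos (pow_nonneg hlr.le 2) hμ]
  rw [posRpow, posRpow, if_neg (mul_pos (pow_pos hlr 2) hμ).not_ge, if_neg hμ.not_ge,
    Real.mul_rpow (by positivity) hμ.le, ← Real.rpow_natCast, ← Real.rpow_mul hl.le,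
    ← Real.rpow_mul hl.le]
  push_cast
  ring_nf

theorem ConvexOn.map_mul_sum_le {ι : Type*} {s : Set ℝ} {f : ℝ → ℝ} (hf : ConvexOn ℝ s f)
    (t : Finset ι) {a x : ι → ℝ} {c : ℝ} (ha : ∀ k ∈ t, 0 ≤ a k) (hx : ∀ k ∈ t, x k ∈ s)
    (hc : c * ∑ k ∈ t, a k = ∑ k ∈ t, a k * x k) :
    f c * ∑ k ∈ t, a k ≤ ∑ k ∈ t, a k * f (x k) := by
  rcases (Finset.sum_nonneg ha).eq_or_lt with hsum | hsum
  · have hzero := (Finset.sum_eq_zero_iff_of_nonneg ha).mp hsum.symm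
    rw [← hsum, mul_zero, Finset.sum_eq_zero fun k hk => by rw [hzero k hk, zero_mul]]
  have hcenter : t.centerMass a x = c := by
    rw [Finset.centerMass, smul_eq_mul, inv_mul_eq_iff_eq_mul₀ hsum.ne', mul_comm, hc]
    simp only [smul_eq_mul]
  have := hf.map_centerMass_le ha hsum hx
  rw [hcenter, Finset.centerMass, le_inv_smul_iff_of_pos hsum] at this
  simpa [smul_eq_mul, mul_comm] using this

namespace Matrix.IsHermitian

variable {A : Matrix n n ℂ} (hA : A.IsHermitian)

lemma cfc_mulVec_eigenvectorBasis (f : ℝ → ℝ) (j : n) :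
    hA.cfc f *ᵥ ⇑(hA.eigenvectorBasis j) =
      (f (hA.eigenvalues j) : ℂ) • ⇑(hA.eigenvectorBasis j) := by
  rw [IsHermitian.cfc, Unitary.conjStarAlgAut_apply, ← mulVec_mulVec, ← mulVec_mulVec,
    star_eigenvectorUnitary_mulVec, diagonal_mulVec_single, ← smul_eq_mul, Pi.single_smul,
    mulVec_smul, eigenvectorUnitary_mulVec]
  rfl

lemma star_eigenvectorBasis_dotProduct_self (j : n) :
    star ⇑(hA.eigenvectorBasis j) ⬝ᵥ ⇑(hA.eigenvectorBasis j) = 1 := by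
  rw [dotProduct_comm, ← EuclideanSpace.inner_eq_star_dotProduct,
    inner_self_eq_norm_sq_to_K, hA.eigenvectorBasis.orthonormal.1 j]
  simp

lemma trace_eq_sum_dotProduct_eigenvectorBasis (Y : Matrix n n ℂ) :
    Y.trace = ∑ j, star ⇑(hA.eigenvectorBasis j) ⬝ᵥ (Y *ᵥ ⇑(hA.eigenvectorBasis j)) := by
  set U : Matrix n n ℂ := (hA.eigenvectorUnitary : Matrix n n ℂ)
  calc Y.trace = (star U * Y * U).trace := by
        rw [trace_mul_cycle, Unitary.mul_star_self_of_mem hA.eigenvectorUnitary.2, one_mul]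
    _ = _ := by
        simp only [trace, diag, mul_apply, dotProduct, mulVec, Finset.sum_mul, Finset.mul_sum,
          star_apply, Pi.star_apply]
        refine Finset.sum_congr rfl fun j _ => ?_
        rw [Finset.sum_comm]
        refine Finset.sum_congr rfl fun a _ => Finset.sum_congr rfl fun b _ => ?_
        simp only [U, eigenvectorUnitary_apply]
        ring

lemma trace_cfc_mul (f : ℝ → ℝ) (T : Matrix n n ℂ) :
    (hA.cfc f * T).trace = ∑ j, (f (hA.eigenvalues j) : ℂ) *
      (star ⇑(hA.eigenvectorBasis j) ⬝ᵥ (T *ᵥ ⇑(hA.eigenvectorBasis j))) := by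
  rw [trace_mul_comm, hA.trace_eq_sum_dotProduct_eigenvectorBasis]
  simp only [← mulVec_mulVec, cfc_mulVec_eigenvectorBasis, mulVec_smul, dotProduct_smul,
    smul_eq_mul]

lemma dotProduct_cfc_mulVec (f : ℝ → ℝ) (z : n → ℂ) :
    star z ⬝ᵥ (hA.cfc f *ᵥ z) = ∑ k, (f (hA.eigenvalues k) : ℂ) *
      Complex.normSq ((star (hA.eigenvectorUnitary : Matrix n n ℂ) *ᵥ z) k) := by
  have hstar : star z ᵥ* (hA.eigenvectorUnitary : Matrix n n ℂ) =
      star (star (hA.eigenvectorUnitary : Matrix n n ℂ) *ᵥ z) := by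
    rw [star_mulVec, star_eq_conjTranspose, conjTranspose_conjTranspose]
  rw [IsHermitian.cfc, Unitary.conjStarAlgAut_apply, ← mulVec_mulVec, ← mulVec_mulVec,
    dotProduct_mulVec, hstar]
  simp only [dotProduct, mulVec_diagonal]
  refine Finset.sum_congr rfl fun k _ => ?_
  rw [Complex.normSq_eq_conj_mul_self, Pi.star_apply, Complex.star_def]
  simp only [Function.comp_apply, RCLike.ofReal_eq_complex_ofReal]
  ring

lemma mul_re_dotProduct_le_re_dotProduct_cfc {s : Set ℝ} {f : ℝ → ℝ} (hf : ConvexOn ℝ s f)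
    (hs : ∀ k, hA.eigenvalues k ∈ s) (z : n → ℂ) {c : ℝ}
    (hc : c * (star z ⬝ᵥ z).re = (star z ⬝ᵥ (A *ᵥ z)).re) :
    f c * (star z ⬝ᵥ z).re ≤ (star z ⬝ᵥ (hA.cfc f *ᵥ z)).re := by
  have hre : ∀ g : ℝ → ℝ, (star z ⬝ᵥ (hA.cfc g *ᵥ z)).re = ∑ k,
      Complex.normSq ((star (hA.eigenvectorUnitary : Matrix n n ℂ) *ᵥ z) k) *
        g (hA.eigenvalues k) := fun g => by
    simp only [dotProduct_cfc_mulVec, Complex.re_sum, ← Complex.ofReal_mul, Complex.ofReal_re,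
      mul_comm]
  have hid : hA.cfc id = A := (hA.cfc_eq id).symm.trans (cfc_id ℝ A)
  have hone : hA.cfc (fun _ => 1) = 1 := (hA.cfc_eq _).symm.trans (cfc_const_one ℝ A)
  have hdot : star z ⬝ᵥ z = star z ⬝ᵥ (hA.cfc (fun _ => 1) *ᵥ z) := by rw [hone, one_mulVec]
  rw [← hid, hdot, hre, hre] at hc
  rw [hdot, hre, hre]
  simp only [id, mul_one] at hc ⊢
  exact hf.map_mul_sum_le Finset.univ (fun k _ => Complex.normSq_nonneg _) (fun k _ => hs k) hc

lemma ext_of_mulVec_eigenvectorBasis {M₁ M₂ : Matrix n n ℂ}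
    (h : ∀ j, M₁ *ᵥ ⇑(hA.eigenvectorBasis j) = M₂ *ᵥ ⇑(hA.eigenvectorBasis j)) : M₁ = M₂ := by
  apply Matrix.toEuclideanLin.injective <| hA.eigenvectorBasis.toBasis.ext fun j => ?_
  simp [toLpLin_apply, h j]

lemma mul_cfc_of_mul_eq_smul {P : Matrix n n ℂ} {l : ℝ} (h : P * A = (l : ℂ) • P)
    (g : ℝ → ℝ) : P * hA.cfc g = (g l : ℂ) • P := by
  refine hA.ext_of_mulVec_eigenvectorBasis fun j => ?_
  have heig : ((hA.eigenvalues j : ℂ) - l) • (P *ᵥ ⇑(hA.eigenvectorBasis j)) = 0 := by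
    rw [sub_smul, ← mulVec_smul, Complex.coe_smul, ← hA.mulVec_eigenvectorBasis,
      mulVec_mulVec, h, smul_mulVec, sub_self]
  rw [← mulVec_mulVec, cfc_mulVec_eigenvectorBasis, mulVec_smul, smul_mulVec]
  rcases smul_eq_zero.mp heig with hl | hzero
  · rw [show hA.eigenvalues j = l by exact_mod_cast sub_eq_zero.mp hl]
  · rw [hzero, smul_zero, smul_zero]

lemma cfc_mul_of_mul_eq_smul {P : Matrix n n ℂ} (hP : P.IsHermitian) {l : ℝ}
    (h : P * A = (l : ℂ) • P) (g : ℝ → ℝ) : hA.cfc g * P = (g l : ℂ) • P := by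
  simpa [conjTranspose_mul, (cfcHerm hA g).eq, hP.eq] using
    congrArg (·ᴴ) (hA.mul_cfc_of_mul_eq_smul h g)

end Matrix.IsHermitian

lemma star_mulVec_dotProduct_mulVec_of_isHermitian {Q : Matrix n n ℂ} (hQ : Q.IsHermitian)
    (Y : Matrix n n ℂ) (u w : n → ℂ) :
    star (Q *ᵥ u) ⬝ᵥ (Y *ᵥ (Q *ᵥ w)) = star u ⬝ᵥ ((Q * Y * Q) *ᵥ w) := by
  rw [star_mulVec, hQ.eq, ← dotProduct_mulVec, mulVec_mulVec, mulVec_mulVec, Matrix.mul_assoc]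

lemma star_mulVec_dotProduct_mulVec_self_of_isHermitian {Q : Matrix n n ℂ} (hQ : Q.IsHermitian)
    (hQQ : Q * Q = Q) (w : n → ℂ) : star (Q *ᵥ w) ⬝ᵥ (Q *ᵥ w) = star w ⬝ᵥ (Q *ᵥ w) := by
  simpa [hQQ] using star_mulVec_dotProduct_mulVec_of_isHermitian hQ 1 w w

section Pinching

variable {ι : Type*} [Fintype ι] {P : ι → Matrix n n ℂ}

lemma sum_trace_mul_mul_self (hPproj : ∀ i, P i * P i = P i) (hPsum : ∑ i, P i = 1)
    (Y : Matrix n n ℂ) : ∑ i, (P i * Y * P i).trace = Y.trace := by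
  simp_rw [trace_mul_cycle (P _) Y (P _), hPproj]
  rw [← trace_sum, ← Finset.sum_mul, hPsum, one_mul]

lemma mul_sum_smul_self (hPproj : ∀ i, P i * P i = P i)
    (hPorth : ∀ i j, i ≠ j → P i * P j = 0) (c : ι → ℂ) (i : ι) :
    P i * ∑ k, c k • P k = c i • P i := by
  rw [Finset.mul_sum, Finset.sum_eq_single i (fun k _ hk => by
    rw [mul_smul_comm, hPorth i k hk.symm, smul_zero]) (by simp), mul_smul_comm, hPproj]

lemma mul_sum_mul_mul_self (hPproj : ∀ i, P i * P i = P i)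
    (hPorth : ∀ i j, i ≠ j → P i * P j = 0) (Y : Matrix n n ℂ) (i : ι) :
    P i * ∑ k, P k * Y * P k = P i * Y * P i := by
  rw [Finset.mul_sum, Finset.sum_eq_single i (fun k _ hk => by
    rw [← Matrix.mul_assoc, ← Matrix.mul_assoc, hPorth i k hk.symm, Matrix.zero_mul,
      Matrix.zero_mul]) (by simp), ← Matrix.mul_assoc, ← Matrix.mul_assoc, hPproj]

lemma sum_sum_star_mulVec_dotProduct_mulVec_eigenvectorBasis
    (hPherm : ∀ i, (P i).IsHermitian) (hPproj : ∀ i, P i * P i = P i) (hPsum : ∑ i, P i = 1)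
    {A : Matrix n n ℂ} (hA : A.IsHermitian) (Y : Matrix n n ℂ) :
    ∑ i, ∑ j, star (P i *ᵥ ⇑(hA.eigenvectorBasis j)) ⬝ᵥ
      (Y *ᵥ (P i *ᵥ ⇑(hA.eigenvectorBasis j))) = Y.trace := by
  simp_rw [star_mulVec_dotProduct_mulVec_of_isHermitian (hPherm _),
    ← hA.trace_eq_sum_dotProduct_eigenvectorBasis]
  exact sum_trace_mul_mul_self hPproj hPsum Y

lemma sum_star_mulVec_dotProduct_mulVec_self (hPherm : ∀ i, (P i).IsHermitian)
    (hPproj : ∀ i, P i * P i = P i) (hPsum : ∑ i, P i = 1) (w : n → ℂ) :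
    ∑ i, star (P i *ᵥ w) ⬝ᵥ (P i *ᵥ w) = star w ⬝ᵥ w := by
  simp_rw [star_mulVec_dotProduct_mulVec_self_of_isHermitian (hPherm _) (hPproj _),
    ← dotProduct_sum, ← sum_mulVec, hPsum, one_mulVec]

lemma re_trace_cfc_mul_sum_smul (hPherm : ∀ i, (P i).IsHermitian)
    (hPproj : ∀ i, P i * P i = P i) {A : Matrix n n ℂ} (hA : A.IsHermitian) (f : ℝ → ℝ)
    (t : ι → ℝ) :
    (hA.cfc f * ∑ i, (t i : ℂ) • P i).trace.re = ∑ i, ∑ j, t i * f (hA.eigenvalues j) *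
      (star (P i *ᵥ ⇑(hA.eigenvectorBasis j)) ⬝ᵥ (P i *ᵥ ⇑(hA.eigenvectorBasis j))).re := by
  simp_rw [hA.trace_cfc_mul, sum_mulVec, smul_mulVec, dotProduct_sum, dotProduct_smul,
    ← star_mulVec_dotProduct_mulVec_self_of_isHermitian (hPherm _) (hPproj _)]
  simp only [smul_eq_mul, Finset.mul_sum, Complex.re_sum, ← mul_assoc, ← Complex.ofReal_mul,
    Complex.re_ofReal_mul]
  rw [Finset.sum_comm]
  simp only [mul_comm (f _)]

lemma star_mulVec_dotProduct_sandwich_mulVec (hPherm : ∀ i, (P i).IsHermitian)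
    (hPproj : ∀ i, P i * P i = P i) (hPorth : ∀ i j, i ≠ j → P i * P j = 0)
    {ρ : Matrix n n ℂ} (hB : (∑ k, P k * ρ * P k).IsHermitian) {M : Matrix n n ℂ} {c : ℝ} {i : ι}
    (hPM : P i * M = (c : ℂ) • P i) (hMP : M * P i = (c : ℂ) • P i) (j : n) :
    star (P i *ᵥ ⇑(hB.eigenvectorBasis j)) ⬝ᵥ ((M * ρ * M) *ᵥ (P i *ᵥ ⇑(hB.eigenvectorBasis j)))
      = ((c ^ 2 * hB.eigenvalues j : ℝ) : ℂ) *
        (star (P i *ᵥ ⇑(hB.eigenvectorBasis j)) ⬝ᵥ (P i *ᵥ ⇑(hB.eigenvectorBasis j))) := by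
  have hsandwich : P i * (M * ρ * M) * P i = ((c : ℂ) ^ 2) • (P i * ∑ k, P k * ρ * P k) := by
    rw [mul_sum_mul_mul_self hPproj hPorth, show P i * (M * ρ * M) * P i = P i * M * ρ * (M * P i)
      by simp only [Matrix.mul_assoc], hPM, hMP, smul_mul_assoc, smul_mul_assoc, mul_smul_comm,
      smul_smul, sq]
  rw [star_mulVec_dotProduct_mulVec_of_isHermitian (hPherm i), hsandwich, smul_mulVec,
    ← mulVec_mulVec, hB.mulVec_eigenvectorBasis, mulVec_smul, ← Complex.coe_smul,
    dotProduct_smul, dotProduct_smul,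
    ← star_mulVec_dotProduct_mulVec_self_of_isHermitian (hPherm i) (hPproj i), smul_smul,
    smul_eq_mul]
  push_cast
  ring

lemma exists_pos_weight_of_pinching (hPherm : ∀ i, (P i).IsHermitian)
    (hPproj : ∀ i, P i * P i = P i) (hPorth : ∀ i j, i ≠ j → P i * P j = 0)
    (hPsum : ∑ i, P i = 1) {ρ : Matrix n n ℂ} (hρ : ρ.PosSemidef) (hρtr : ρ.trace = 1)
    {l : ι → ℝ} (hl : ∀ i, 0 ≤ l i) (hsupp : ∀ i, l i = 0 → P i * ρ = 0)
    (hB : (∑ i, P i * ρ * P i).IsHermitian) :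
    ∃ i j, 0 < l i ∧ 0 < hB.eigenvalues j ∧
      0 < (star (P i *ᵥ ⇑(hB.eigenvectorBasis j)) ⬝ᵥ (P i *ᵥ ⇑(hB.eigenvectorBasis j))).re := by
  have hBpsd : (∑ i, P i * ρ * P i).PosSemidef := posSemidef_sum _ fun i _ => by
    simpa [(hPherm i).eq] using hρ.conjTranspose_mul_mul_same (P i)
  have htrace := hB.trace_eq_sum_eigenvalues
  rw [trace_sum, sum_trace_mul_mul_self hPproj hPsum, hρtr] at htrace
  obtain ⟨j, -, hj⟩ := Finset.exists_ne_zero_of_sum_ne_zero (htrace ▸ one_ne_zero)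
  replace hj : hB.eigenvalues j ≠ 0 := by simpa using hj
  have hnorm : ∑ i, star (P i *ᵥ ⇑(hB.eigenvectorBasis j)) ⬝ᵥ (P i *ᵥ ⇑(hB.eigenvectorBasis j))
      = 1 := by
    rw [sum_star_mulVec_dotProduct_mulVec_self hPherm hPproj hPsum,
      hB.star_eigenvectorBasis_dotProduct_self]
  obtain ⟨i, -, hi⟩ := Finset.exists_ne_zero_of_sum_ne_zero (hnorm ▸ one_ne_zero)
  have hli : l i ≠ 0 := fun hli => hi <| by
    have hPB : P i * ∑ k, P k * ρ * P k = 0 := by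
      rw [mul_sum_mul_mul_self hPproj hPorth, hsupp i hli, Matrix.zero_mul]
    have hzero : (hB.eigenvalues j : ℂ) • (P i *ᵥ ⇑(hB.eigenvectorBasis j)) = 0 := by
      rw [← mulVec_smul, Complex.coe_smul, ← hB.mulVec_eigenvectorBasis, mulVec_mulVec, hPB,
        zero_mulVec]
    rw [(smul_eq_zero.mp hzero).resolve_left (Complex.ofReal_ne_zero.mpr hj), dotProduct_zero]
  exact ⟨i, j, (hl i).lt_of_ne' hli, (hBpsd.eigenvalues_nonneg j).lt_of_ne' hj,
    (Complex.pos_iff.mp ((dotProduct_star_self_nonneg _).lt_of_ne' hi)).1⟩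

lemma re_trace_cfc_pinching_mul_sum_smul_pos (hPherm : ∀ i, (P i).IsHermitian)
    (hPproj : ∀ i, P i * P i = P i) (hPorth : ∀ i j, i ≠ j → P i * P j = 0)
    (hPsum : ∑ i, P i = 1) {ρ : Matrix n n ℂ} (hρ : ρ.PosSemidef) (hρtr : ρ.trace = 1)
    {l : ι → ℝ} (hl : ∀ i, 0 ≤ l i) (hsupp : ∀ i, l i = 0 → P i * ρ = 0)
    (hB : (∑ i, P i * ρ * P i).IsHermitian) (p q : ℝ) :
    0 < (hB.cfc (posRpow p) * ∑ i, (pseudoRpow q (l i) : ℂ) • P i).trace.re := by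
  rw [re_trace_cfc_mul_sum_smul hPherm hPproj]
  have hnonneg (i : ι) (j : n) : 0 ≤ pseudoRpow q (l i) * posRpow p (hB.eigenvalues j) *
      (star (P i *ᵥ ⇑(hB.eigenvectorBasis j)) ⬝ᵥ (P i *ᵥ ⇑(hB.eigenvectorBasis j))).re :=
    mul_nonneg (mul_nonneg (pseudoRpow_nonneg _ (hl i)) (posRpow_nonneg _ _))
      (Complex.nonneg_iff.mp (dotProduct_star_self_nonneg _)).1
  obtain ⟨i, j, hli, hμj, hzij⟩ :=
    exists_pos_weight_of_pinching hPherm hPproj hPorth hPsum hρ hρtr hl hsupp hB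
  refine Finset.sum_pos' (fun i _ => Finset.sum_nonneg fun j _ => hnonneg i j)
    ⟨i, Finset.mem_univ _, Finset.sum_pos' (fun j _ => hnonneg i j) ⟨j, Finset.mem_univ _, ?_⟩⟩
  exact mul_pos (mul_pos (pseudoRpow_pos _ hli) (posRpow_pos hμj)) hzij

lemma re_trace_cfc_pinching_mul_sum_smul_le (hPherm : ∀ i, (P i).IsHermitian)
    (hPproj : ∀ i, P i * P i = P i) (hPorth : ∀ i j, i ≠ j → P i * P j = 0)
    (hPsum : ∑ i, P i = 1) {ρ : Matrix n n ℂ} (hρ : ρ.PosSemidef) {σ : Matrix n n ℂ}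
    (hσ : σ.IsHermitian) {l : ι → ℝ} (hl : ∀ i, 0 ≤ l i)
    (hPσ : ∀ i, P i * σ = (l i : ℂ) • P i) (hB : (∑ i, P i * ρ * P i).IsHermitian)
    {α : ℝ} (hα : 0 ≤ α) :
    (hB.cfc (posRpow (1 + α)) * ∑ i, (pseudoRpow (-α) (l i) : ℂ) • P i).trace.re ≤
      ((sandwichHerm hρ.1 hσ (-(α / (2 * (1 + α))))).cfc (posRpow (1 + α))).trace.re := by
  set r := -(α / (2 * (1 + α)))
  set hX := sandwichHerm hρ.1 hσ r
  have hXpsd : (mpow hσ r * ρ * mpow hσ r).PosSemidef := by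
    have hM : (mpow hσ r)ᴴ = mpow hσ r := (cfcHerm hσ _).eq
    simpa only [hM] using hρ.conjTranspose_mul_mul_same (mpow hσ r)
  have hexp : 2 * r * (1 + α) = -α := by
    simp only [r]
    field_simp
  rw [re_trace_cfc_mul_sum_smul hPherm hPproj,
    ← sum_sum_star_mulVec_dotProduct_mulVec_eigenvectorBasis hPherm hPproj hPsum hB,
    Complex.re_sum]
  refine Finset.sum_le_sum fun i _ => ?_
  rw [Complex.re_sum]
  refine Finset.sum_le_sum fun j _ => ?_
  rw [← hexp, ← posRpow_pseudoRpow_sq_mul _ _ (hl i)]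
  refine hX.mul_re_dotProduct_le_re_dotProduct_cfc (convexOn_posRpow (by linarith))
    hXpsd.eigenvalues_nonneg _ ?_
  have hPM : P i * mpow hσ r = (pseudoRpow r (l i) : ℂ) • P i :=
    hσ.mul_cfc_of_mul_eq_smul (hPσ i) _
  have hMP : mpow hσ r * P i = (pseudoRpow r (l i) : ℂ) • P i :=
    hσ.cfc_mul_of_mul_eq_smul (hPherm i) (hPσ i) _
  rw [star_mulVec_dotProduct_sandwich_mulVec hPherm hPproj hPorth hB hPM hMP,
    Complex.re_ofReal_mul]

end Pinching

theorem pinching_data_processing_sandwiched_renyi_general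
    {v : ℕ} (P : Fin v → Matrix n n ℂ) (l : Fin v → ℝ)
    (hPherm : ∀ i, (P i).IsHermitian)
    (hPproj : ∀ i, P i * P i = P i)
    (hPorth : ∀ i j, i ≠ j → P i * P j = 0)
    (hPsum : ∑ i, P i = (1 : Matrix n n ℂ))
    (hl_nonneg : ∀ i, 0 ≤ l i)
    (σ : Matrix n n ℂ) (hσ : σ.PosSemidef) (hσdef : σ = ∑ i, (l i : ℂ) • P i)
    (ρ : Matrix n n ℂ) (hρ : ρ.PosSemidef) (hρtr : ρ.trace = 1)
    (hsupp : ∀ i, l i = 0 → P i * ρ = 0)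
    (α : ℝ) (hα0 : 0 < α) :
    (1 / α) * Real.logb 2
      ((((pinchHerm P hPherm hρ.1).cfc (fun t => if t ≤ 0 then 0 else t ^ (1 + α))) *
        (∑ i, ((if l i = 0 then 0 else (l i) ^ (-α) : ℝ) : ℂ) • P i)).trace.re)
      ≤ sandRenyi α ρ σ hρ.1 hσ.1 := by
  have hPσ (i : Fin v) : P i * σ = (l i : ℂ) • P i := by
    rw [hσdef]
    exact mul_sum_smul_self hPproj hPorth _ i
  exact mul_le_mul_of_nonneg_left
    (Real.logb_le_logb_of_le one_lt_two
      (re_trace_cfc_pinching_mul_sum_smul_pos hPherm hPproj hPorth hPsum hρ hρtr hl_nonneg hsupp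
        _ (1 + α) (-α))
      (re_trace_cfc_pinching_mul_sum_smul_le hPherm hPproj hPorth hPsum hρ hσ.1 hl_nonneg hPσ _
        hα0.le))
    (by positivity)

theorem pinching_data_processing_sandwiched_renyi
    {v : ℕ} (P : Fin v → Matrix n n ℂ) (l : Fin v → ℝ)
    (hPherm : ∀ i, (P i).IsHermitian)
    (hPproj : ∀ i, P i * P i = P i)
    (hPorth : ∀ i j, i ≠ j → P i * P j = 0)
    (hPsum : ∑ i, P i = (1 : Matrix n n ℂ))
    (hl_distinct : Function.Injective l)
    (hl_nonneg : ∀ i, 0 ≤ l i)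
    (σ : Matrix n n ℂ) (hσ : σ.PosSemidef) (hσdef : σ = ∑ i, (l i : ℂ) • P i)
    (hσtr : σ.trace = 1)
    (ρ : Matrix n n ℂ) (hρ : ρ.PosSemidef) (hρtr : ρ.trace = 1)
    (hsupp : ∀ i, l i = 0 → P i * ρ = 0)
    (α : ℝ) (hα0 : 0 < α) (hα1 : α ≤ 1) :
    (1 / α) * Real.logb 2
      ((((pinchHerm P hPherm hρ.1).cfc (fun t => if t ≤ 0 then 0 else t ^ (1 + α))) *
        (∑ i, ((if l i = 0 then 0 else (l i) ^ (-α) : ℝ) : ℂ) • P i)).trace.re)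
      ≤ sandRenyi α ρ σ hρ.1 hσ.1 :=
  pinching_data_processing_sandwiched_renyi_general P l hPherm hPproj hPorth hPsum hl_nonneg σ hσ
    hσdef ρ hρ hρtr hsupp α hα0
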